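/- arXiv:1401.2659 — 2 statements merged into one kernel-verified Lean document; each statement's English description precedes it below -/
import Mathlib

section
/- Let a ≥ b ≥ 1, k ≥ 1, and n = Σ_{i=0}^{k−1}(ai + b). Then D^k_{a,b}(n) contains exactly one partition, namely λ with λ_i = a(k − i) + b for 1 ≤ i ≤ k. -/
/-!
A positive part congruent to `b` modulo `a ≥ b` is at least `b`. In a partition from
`D^k_{a,b}(n)` the smallest of the first `k` parts is therefore at least `b`, and the gap
condition makes the `i`-th largest part at least `a (k - 1 - i) + b`: the partition dominates the
staircase termwise. The staircase already sums to `n`, so there is no room for slack or for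
further parts.
-/

/-- `Dab a b n`: partitions of `n` into distinct parts each congruent to `b` mod `a`. -/
def Dab (a b n : ℕ) : Finset (Nat.Partition n) :=
  Finset.univ.filter (fun P => P.parts.Nodup ∧ ∀ x ∈ P.parts, x % a = b % a)

/-- The parts of a partition listed in nonincreasing order. -/
def partsDesc {n : ℕ} (P : Nat.Partition n) : List ℕ :=
  (P.parts.sort (· ≤ ·)).reverse

open Classical in
/-- `Dj a b j n`: partitions in `Dab a b n` with at least `j` parts whose first `j - 1`
consecutive gaps `λ_1 - λ_2, …, λ_{j-1} - λ_j` all equal `a`. -/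
noncomputable def Dj (a b j n : ℕ) : Finset (Nat.Partition n) :=
  (Dab a b n).filter (fun P => j ≤ Multiset.card P.parts ∧
    ∀ i, i + 1 < j → (partsDesc P).getD i 0 = (partsDesc P).getD (i + 1) 0 + a)

open Finset

namespace List

lemma sum_map_range (g : ℕ → ℕ) (k : ℕ) :
    ((List.range k).map g).sum = ∑ i ∈ Finset.range k, g i := by
  rw [Finset.sum_eq_multiset_sum]; rfl

lemma sum_eq_sum_range_getD (l : List ℕ) :
    l.sum = ∑ i ∈ Finset.range l.length, l.getD i 0 := by
  induction l with
  | nil => simp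
  | cons x l ih => simp [Finset.sum_range_succ', ih, Nat.add_comm, getD_eq_getElem?_getD]

lemma getD_mem_of_lt {l : List ℕ} {i : ℕ} (hi : i < l.length) : l.getD i 0 ∈ l := by
  rw [getD_eq_getElem _ _ hi]
  exact getElem_mem hi

lemma getD_eq_getD_add_mul_of_gaps {l : List ℕ} {a k : ℕ}
    (hgap : ∀ i, i + 1 < k → l.getD i 0 = l.getD (i + 1) 0 + a) {i d : ℕ} (h : i + d < k) :
    l.getD i 0 = l.getD (i + d) 0 + a * d := by
  induction d generalizing i with
  | zero => simp
  | succ d ih =>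
    rw [hgap i (by omega), ih (i := i + 1) (by omega)]
    ring_nf

lemma eq_map_range_of_le_getD {l : List ℕ} {g : ℕ → ℕ} {k : ℕ} (hpos : ∀ x ∈ l, 0 < x)
    (hk : k ≤ l.length) (hle : ∀ i < k, g i ≤ l.getD i 0)
    (hsum : l.sum ≤ ∑ i ∈ Finset.range k, g i) : l = (List.range k).map g := by
  have hsplit := l.sum_eq_sum_range_getD
  rw [← sum_range_add_sum_Ico _ hk] at hsplit
  have htail : l.length - k ≤ ∑ i ∈ Finset.Ico k l.length, l.getD i 0 :=
    calc l.length - k = ∑ _i ∈ Finset.Ico k l.length, 1 := by simp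
      _ ≤ _ := sum_le_sum fun i hi => hpos _ (getD_mem_of_lt (mem_Ico.1 hi).2)
  have hhead : ∑ i ∈ Finset.range k, g i ≤ ∑ i ∈ Finset.range k, l.getD i 0 :=
    sum_le_sum fun i hi => hle i (mem_range.1 hi)
  have hlen : l.length = k := by omega
  have heq : ∀ i ∈ Finset.range k, g i = l.getD i 0 :=
    (sum_eq_sum_iff_of_le (s := Finset.range k) fun i hi => hle i (mem_range.1 hi)).1 (by omega)
  refine ext_getElem (by simp [hlen]) fun i h1 h2 => ?_
  rw [getElem_map, getElem_range, heq i (by simp [← hlen, h1]), getD_eq_getElem _ _ h1]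

end List

lemma Nat.le_of_mod_eq_mod {a b x : ℕ} (hab : b ≤ a) (hx : 0 < x) (h : x % a = b % a) :
    b ≤ x := by
  rcases hab.lt_or_eq with hlt | rfl
  · rw [Nat.mod_eq_of_lt hlt] at h
    exact h ▸ Nat.mod_le x a
  · rw [Nat.mod_self] at h
    exact Nat.le_of_dvd hx (Nat.dvd_of_mod_eq_zero h)

section partsDesc

variable {n : ℕ}

lemma coe_partsDesc (P : Nat.Partition n) : (partsDesc P : Multiset ℕ) = P.parts := by
  rw [partsDesc, Multiset.coe_reverse, Multiset.sort_eq]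

lemma mem_partsDesc {P : Nat.Partition n} {x : ℕ} : x ∈ partsDesc P ↔ x ∈ P.parts := by
  rw [← Multiset.mem_coe, coe_partsDesc]

lemma length_partsDesc (P : Nat.Partition n) : (partsDesc P).length = Multiset.card P.parts := by
  rw [← Multiset.coe_card, coe_partsDesc]

lemma sum_partsDesc (P : Nat.Partition n) : (partsDesc P).sum = n := by
  rw [← Multiset.sum_coe, coe_partsDesc, P.parts_sum]

lemma partsDesc_injective : Function.Injective (partsDesc (n := n)) := fun P Q h =>
  Nat.Partition.ext (by rw [← coe_partsDesc P, h, coe_partsDesc])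

lemma partsDesc_eq_of_parts_eq {P : Nat.Partition n} {l : List ℕ} (hP : P.parts = l)
    (hl : l.Pairwise (· ≥ ·)) : partsDesc P = l := by
  have hsort : P.parts.sort (· ≤ ·) = l.reverse := by
    refine List.Perm.eq_of_pairwise' (Multiset.pairwise_sort _ _) (List.pairwise_reverse.2 hl) ?_
    rw [← Multiset.coe_eq_coe, Multiset.sort_eq, Multiset.coe_reverse, hP]
  rw [partsDesc, hsort, List.reverse_reverse]

end partsDesc

def staircase (a b k : ℕ) : List ℕ := (List.range k).map fun i => a * (k - 1 - i) + b

section staircase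

variable {a b k : ℕ}

lemma length_staircase : (staircase a b k).length = k := by
  simp [staircase]

lemma getD_staircase {i : ℕ} (hi : i < k) :
    (staircase a b k).getD i 0 = a * (k - 1 - i) + b := by
  rw [List.getD_eq_getElem _ _ (by simpa [length_staircase] using hi)]
  simp [staircase]

lemma sum_staircase : (staircase a b k).sum = ∑ i ∈ range k, (a * i + b) := by
  rw [staircase, List.sum_map_range, ← sum_range_reflect (fun i => a * i + b) k]

lemma pairwise_gt_staircase (ha : 0 < a) : (staircase a b k).Pairwise (· > ·) := by
  refine List.pairwise_map.2 (List.pairwise_lt_range.imp_of_mem fun hi hj hij => ?_)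
  have hjk := List.mem_range.1 hj
  have : k - 1 - _ < k - 1 - _ := Nat.sub_lt_sub_left (by omega) hij
  nlinarith

def staircasePartition (a b k : ℕ) (hb : 0 < b) :
    Nat.Partition (∑ i ∈ range k, (a * i + b)) where
  parts := staircase a b k
  parts_pos := by
    simp only [staircase, Multiset.mem_coe, List.mem_map]
    rintro _ ⟨i, -, rfl⟩
    omega
  parts_sum := by rw [Multiset.sum_coe, sum_staircase]

lemma partsDesc_staircasePartition (hb : 0 < b) (ha : 0 < a) :
    partsDesc (staircasePartition a b k hb) = staircase a b k :=
  partsDesc_eq_of_parts_eq rfl ((pairwise_gt_staircase ha).imp le_of_lt)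

lemma staircasePartition_mem_Dj (hb : 0 < b) (ha : 0 < a) :
    staircasePartition a b k hb ∈ Dj a b k _ := by
  simp only [Dj, Dab, mem_filter, mem_univ, true_and, partsDesc_staircasePartition hb ha]
  refine ⟨⟨(pairwise_gt_staircase ha).nodup, ?_⟩,
    by simp [staircasePartition, length_staircase], ?_⟩
  · simp only [staircasePartition, staircase, Multiset.mem_coe, List.mem_map]
    rintro _ ⟨i, -, rfl⟩
    exact Nat.mul_add_mod ..
  · intro i hi
    rw [getD_staircase (by omega), getD_staircase hi,
      show k - 1 - i = k - 1 - (i + 1) + 1 by omega]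
    ring

lemma partsDesc_eq_staircase_of_mem_Dj (hab : b ≤ a)
    {P : Nat.Partition (∑ i ∈ range k, (a * i + b))} (hP : P ∈ Dj a b k _) :
    partsDesc P = staircase a b k := by
  simp only [Dj, Dab, mem_filter] at hP
  obtain ⟨⟨-, -, hmod⟩, hcard, hgap⟩ := hP
  have hsum : (partsDesc P).sum = ∑ i ∈ range k, (a * (k - 1 - i) + b) := by
    rw [sum_partsDesc, ← sum_staircase, staircase, List.sum_map_range]
  refine List.eq_map_range_of_le_getD (fun x hx => P.parts_pos (mem_partsDesc.1 hx))
    (length_partsDesc P ▸ hcard) (fun i hi => ?_) hsum.le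
  have hlast : b ≤ (partsDesc P).getD (k - 1) 0 := by
    have hx := mem_partsDesc.1 (List.getD_mem_of_lt (l := partsDesc P) (i := k - 1)
      (by rw [length_partsDesc]; omega))
    exact Nat.le_of_mod_eq_mod hab (P.parts_pos hx) (hmod _ hx)
  rw [List.getD_eq_getD_add_mul_of_gaps hgap (d := k - 1 - i) (by omega),
    show i + (k - 1 - i) = k - 1 by omega]
  omega

end staircase

theorem stmt7_general (a b k n : ℕ) (hb : 1 ≤ b) (hab : b ≤ a)
    (hn : n = ∑ i ∈ Finset.range k, (a * i + b)) :
    (Dj a b k n).card = 1 ∧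
      ∀ P ∈ Dj a b k n, partsDesc P = (List.range k).map (fun i => a * (k - 1 - i) + b) := by
  subst hn
  have ha : 0 < a := by omega
  refine ⟨card_eq_one.2 ⟨staircasePartition a b k hb, eq_singleton_iff_unique_mem.2
    ⟨staircasePartition_mem_Dj hb ha, fun P hP => partsDesc_injective ?_⟩⟩,
    fun P hP => partsDesc_eq_staircase_of_mem_Dj hab hP⟩
  rw [partsDesc_eq_staircase_of_mem_Dj hab hP, partsDesc_staircasePartition hb ha]

/-- If `n = Σ_{i=0}^{k-1} (a i + b)`, then `D^k_{a,b}(n)` contains exactly one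
partition, the staircase `λ_i = a (k - i) + b` (for `1 ≤ i ≤ k`). -/
theorem stmt7 (a b k n : ℕ) (hb : 1 ≤ b) (hab : b ≤ a) (hk : 1 ≤ k)
    (hn : n = ∑ i ∈ Finset.range k, (a * i + b)) :
    (Dj a b k n).card = 1 ∧
      ∀ P ∈ Dj a b k n, partsDesc P = (List.range k).map (fun i => a * (k - 1 - i) + b) :=
  stmt7_general a b k n hb hab hn
end

section
/- For any n, the number of partitions of n into distinct odd parts is odd if and only if p(n) is odd. -/
/-!
`D = ∏ (1 - X ^ k)` is the inverse of the partition generating function `P`. Over a ring of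
characteristic two, `1 - X ^ k = 1 + X ^ k`, so splitting the factors of `D` by the parity of `k`
gives `D = O * ∏ (1 + X ^ (2 * k)) = O * D ^ 2` by Frobenius, where `O = ∏_{k odd} (1 + X ^ k)`
counts partitions into distinct odd parts. Since `D` is a unit, `O = D⁻¹ = P`, i.e. both counts
agree modulo two.
-/

open Finset PowerSeries PowerSeries.WithPiTopology

namespace Nat.Partition

section Topological

variable (R : Type*) [TopologicalSpace R] [T2Space R]

theorem hasProd_powerSeriesMk_card_restricted_inter_distincts [CommSemiring R]
    (p : ℕ → Prop) [DecidablePred p] :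
    HasProd (fun i ↦ if p (i + 1) then 1 + X ^ (i + 1) else 1)
      (PowerSeries.mk fun n ↦ (#(restricted n p ∩ distincts n) : R)) := by
  convert! hasProd_genFun (fun i c ↦ if p i ∧ c = 1 then (1 : R) else 0) using 1
  · ext1 i
    rw [tsum_eq_single 0 (fun j hj ↦ by simp [hj])]
    by_cases h : p (i + 1) <;> simp [h]
  · simp_rw [genFun, ← countRestricted_two, restricted, countRestricted, ← filter_and,
      card_filter, Finsupp.prod, prod_boole]
    congr! with n
    push_cast
    refine sum_congr rfl fun x _ ↦ if_congr ?_ rfl rfl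
    simp only [Multiset.toFinsupp_support, Multiset.mem_toFinset, Multiset.toFinsupp_apply,
      ← forall_and]
    refine forall₂_congr fun i hi ↦ and_congr_right' ?_
    have := Multiset.count_pos.2 hi
    omega

variable [CommRing R] [IsTopologicalRing R]

theorem powerSeriesMk_card_mul_tprod_one_sub_X_pow :
    (PowerSeries.mk fun n ↦ (Fintype.card n.Partition : R)) * ∏' i, (1 - X ^ (i + 1)) = 1 := by
  have hP := hasProd_powerSeriesMk_card_restricted R (fun _ ↦ True)
  simp only [if_true, restricted, implies_true, filter_true] at hP
  refine (hP.mul (multipliable_one_sub_X_pow R).hasProd).unique ?_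
  simp_rw [pow_mul, tsum_pow_mul_one_sub_of_constantCoeff_eq_zero
    (by simp : constantCoeff (X ^ (_ + 1) : R⟦X⟧) = 0)]
  exact hasProd_one

theorem tprod_one_sub_X_pow_eq_mul_sq [CharP R 2] :
    ∏' i, (1 - X ^ (i + 1) : R⟦X⟧) =
      (PowerSeries.mk fun n ↦ (#(oddDistincts n) : R)) * (∏' i, (1 - X ^ (i + 1))) ^ 2 := by
  have : CharP R⟦X⟧ 2 := charP_of_injective_ringHom C_injective 2
  have hD := (multipliable_one_sub_X_pow R).hasProd
  have hodd : HasProd (fun i ↦ if ¬ Even (i + 1) then 1 + X ^ (i + 1) else 1)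
      (PowerSeries.mk fun n ↦ (#(oddDistincts n) : R)) :=
    hasProd_powerSeriesMk_card_restricted_inter_distincts R _
  have heven : HasProd (fun i ↦ if Even (i + 1) then 1 + X ^ (i + 1) else 1)
      ((∏' i, (1 - X ^ (i + 1) : R⟦X⟧)) ^ 2) := by
    have hinj : Function.Injective fun k ↦ 2 * k + 1 := fun _ _ h ↦ by simpa using h
    refine (hinj.hasProd_iff fun i hi ↦ ?_).mp ?_
    · have : ¬ Even (i + 1) := by
        rintro ⟨k, hk⟩
        exact hi ⟨k - 1, show 2 * (k - 1) + 1 = i by omega⟩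
      simp [this]
    · convert hD.mul hD using 1
      · ext1 k
        have : Even (2 * k + 1 + 1) := ⟨k + 1, by ring⟩
        rw [Function.comp_apply, if_pos this, ← sq, CharTwo.sub_eq_add, CharTwo.add_sq, one_pow,
          ← pow_mul]
        ring_nf
      · rw [sq]
  refine hD.unique ?_
  convert hodd.mul heven using 2 with i
  by_cases h : Even (i + 1) <;> simp [h, CharTwo.sub_eq_add]

end Topological

theorem powerSeriesMk_card_oddDistincts_eq_card (R : Type*) [CommRing R] [CharP R 2] :
    (PowerSeries.mk fun n ↦ (#(oddDistincts n) : R)) =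
      PowerSeries.mk fun n ↦ (Fintype.card n.Partition : R) := by
  let _ : TopologicalSpace R := ⊥
  have _ : DiscreteTopology R := ⟨rfl⟩
  have hPD := powerSeriesMk_card_mul_tprod_one_sub_X_pow R
  have hD := tprod_one_sub_X_pow_eq_mul_sq R
  set O := PowerSeries.mk fun n ↦ (#(oddDistincts n) : R)
  set P := PowerSeries.mk fun n ↦ (Fintype.card n.Partition : R)
  set D := ∏' i, (1 - X ^ (i + 1) : R⟦X⟧)
  -- `O = O * (P * D) ^ 2 = P ^ 2 * (O * D ^ 2) = P ^ 2 * D = P`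
  linear_combination (P - O * (P * D + 1)) * hPD - P ^ 2 * hD

theorem odd_card_oddDistincts_iff (n : ℕ) :
    Odd #(oddDistincts n) ↔ Odd (Fintype.card n.Partition) := by
  have h := congrArg (coeff n) (powerSeriesMk_card_oddDistincts_eq_card (ZMod 2))
  rw [coeff_mk, coeff_mk] at h
  rw [← ZMod.natCast_eq_one_iff_odd, ← ZMod.natCast_eq_one_iff_odd, h]

end Nat.Partition

theorem Dab_two_one_eq_oddDistincts (n : ℕ) : Dab 2 1 n = Nat.Partition.oddDistincts n := by
  ext P
  simp [Dab, Nat.Partition.oddDistincts, Nat.Partition.odds, Nat.Partition.distincts,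
    Nat.Partition.restricted, Nat.odd_iff, and_comm]

/-- The number of partitions of `n` into distinct odd parts is odd iff `p(n)` is odd. -/
theorem stmt19 (n : ℕ) :
    Odd (Dab 2 1 n).card ↔ Odd (Fintype.card (Nat.Partition n)) := by
  rw [Dab_two_one_eq_oddDistincts]
  exact Nat.Partition.odd_card_oddDistincts_iff n
end
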